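/- Let d ∈ ℕ and let f : ℝ^d × ℝ → ℝ^d be continuously differentiable and satisfy the geometry compatibility (incompressibility) condition Σ_{i=1}^d ∂_{x_i} f_i(x,λ) = 0 for all (x,λ) ∈ ℝ^d × ℝ. Let u : ℝ^d → ℝ be continuously differentiable with compact support. Then ∫_{ℝ^d} ⟨ f(x,u(x)), ∇u(x) ⟩ dx = 0. -/

import Mathlib

/-
With `P(x, λ) = ∫₀^λ f(x, t) dt` and `w(x) = P(x, u(x))`, the chain rule gives
`div w = ⟨f(x, u), ∇u⟩ + ∫₀^u div_x f(x, t) dt`, and the last integral vanishes by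
incompressibility. As `w` is `C¹` with compact support, `∫ div w = 0`. That `P` is `C¹` follows
from `P(x, λ) = λ ∫₀¹ f(x, λ s) ds`, a parametric integral over a fixed interval.
-/

open MeasureTheory RealInnerProductSpace

/-- The (Euclidean) divergence of a vector field `V : ℝ^d → ℝ^d`. -/
noncomputable def vdiv {d : ℕ} (V : EuclideanSpace ℝ (Fin d) → EuclideanSpace ℝ (Fin d))
    (x : EuclideanSpace ℝ (Fin d)) : ℝ :=
  ∑ i : Fin d, fderiv ℝ V x (EuclideanSpace.single i (1 : ℝ)) i

open Set Filter Topology ContinuousLinearMap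

section ParametricIntegral

variable {H E : Type*} [NormedAddCommGroup E] [NormedSpace ℝ E]

noncomputable def paramPrimitive (f : H × ℝ → E) (p : H × ℝ) : E :=
  ∫ t in (0 : ℝ)..p.2, f (p.1, t)

theorem paramPrimitive_eq_smul_integral (f : H × ℝ → E) (p : H × ℝ) :
    paramPrimitive f p = p.2 • ∫ s in (0 : ℝ)..1, f (p.1, p.2 * s) := by
  simp [paramPrimitive, intervalIntegral.smul_integral_comp_mul_left (fun t => f (p.1, t))]

theorem paramPrimitive_zero (f : H × ℝ → E) (x : H) : paramPrimitive f (x, 0) = 0 := by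
  simp [paramPrimitive]

variable [NormedAddCommGroup H] [NormedSpace ℝ H]

theorem hasFDerivAt_intervalIntegral_of_contDiff {F : H × ℝ → E} (hF : ContDiff ℝ 1 F)
    (a b : ℝ) (x₀ : H) :
    HasFDerivAt (fun x => ∫ t in a..b, F (x, t))
      (∫ t in a..b, fderiv ℝ F (x₀, t) ∘L inl ℝ H ℝ) x₀ := by
  have hFc : Continuous F := hF.continuous
  have hF' : Continuous (fderiv ℝ F) := hF.continuous_fderiv one_ne_zero
  obtain ⟨M, hM⟩ := (isCompact_uIcc (a := a) (b := b)).exists_bound_of_continuousOn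
    (f := fun t => fderiv ℝ F (x₀, t)) (by fun_prop)
  have hnear : ∀ᶠ x in 𝓝 x₀, ∀ t ∈ uIcc a b, ‖fderiv ℝ F (x, t)‖ < M + 1 :=
    isCompact_uIcc.eventually_forall_of_forall_eventually fun t ht =>
      hF'.norm.continuousAt.eventually_lt continuousAt_const (by linarith [hM t ht])
  refine intervalIntegral.hasFDerivAt_integral_of_dominated_of_fderiv_le
    (F := fun x t => F (x, t)) (F' := fun x t => fderiv ℝ F (x, t) ∘L inl ℝ H ℝ)
    (bound := fun _ => M + 1) hnear (Eventually.of_forall fun x => by fun_prop)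
    ((by fun_prop : Continuous fun t => F (x₀, t)).intervalIntegrable _ _) (by fun_prop)
    (Eventually.of_forall fun t ht x hx => ?_) intervalIntegrable_const
    (Eventually.of_forall fun t _ x _ => ?_)
  · calc ‖fderiv ℝ F (x, t) ∘L inl ℝ H ℝ‖ ≤ ‖fderiv ℝ F (x, t)‖ * ‖inl ℝ H ℝ‖ :=
          opNorm_comp_le _ _
      _ ≤ ‖fderiv ℝ F (x, t)‖ * 1 := by gcongr; exact norm_inl_le_one ℝ H ℝ
      _ ≤ M + 1 := by linarith [hx t (uIoc_subset_uIcc ht)]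
  · exact (hF.differentiable one_ne_zero _).hasFDerivAt.comp x (hasFDerivAt_prodMk_left x t)

theorem contDiff_intervalIntegral {F : H × ℝ → E} (hF : ContDiff ℝ 1 F) (a b : ℝ) :
    ContDiff ℝ 1 (fun x => ∫ t in a..b, F (x, t)) :=
  contDiff_one_iff_hasFDerivAt.2
    ⟨_, intervalIntegral.continuous_parametric_intervalIntegral_of_continuous'
      (f := fun x t => fderiv ℝ F (x, t) ∘L inl ℝ H ℝ) (by fun_prop) a b,
    hasFDerivAt_intervalIntegral_of_contDiff hF a b⟩

theorem contDiff_paramPrimitive {f : H × ℝ → E} (hf : ContDiff ℝ 1 f) :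
    ContDiff ℝ 1 (paramPrimitive f) := by
  rw [funext (paramPrimitive_eq_smul_integral f)]
  exact contDiff_snd.smul <| contDiff_intervalIntegral
    (F := fun q : (H × ℝ) × ℝ => f (q.1.1, q.1.2 * q.2)) (hf.comp (by fun_prop)) 0 1

theorem hasFDerivAt_paramPrimitive [CompleteSpace E] {f : H × ℝ → E} (hf : ContDiff ℝ 1 f)
    (p : H × ℝ) :
    HasFDerivAt (paramPrimitive f)
      ((∫ t in (0 : ℝ)..p.2, fderiv ℝ f (p.1, t) ∘L inl ℝ H ℝ) ∘L fst ℝ H ℝ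
        + (snd ℝ H ℝ).smulRight (f p)) p := by
  obtain ⟨x, lam⟩ := p
  have hP := ((contDiff_paramPrimitive hf).differentiable one_ne_zero (x, lam)).hasFDerivAt
  have hx : fderiv ℝ (paramPrimitive f) (x, lam) ∘L inl ℝ H ℝ
      = ∫ t in (0 : ℝ)..lam, fderiv ℝ f (x, t) ∘L inl ℝ H ℝ := by
    have h := hP.comp x (hasFDerivAt_prodMk_left (𝕜 := ℝ) x lam)
    exact h.unique (hasFDerivAt_intervalIntegral_of_contDiff hf 0 lam x)
  have hlam : fderiv ℝ (paramPrimitive f) (x, lam) (0, 1) = f (x, lam) := by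
    have hc : Continuous fun t => f (x, t) := hf.continuous.comp (by fun_prop)
    exact (hP.comp_hasDerivAt lam ((hasDerivAt_const lam x).prodMk (hasDerivAt_id lam))).unique
      (intervalIntegral.integral_hasDerivAt_right (hc.intervalIntegrable _ _)
        (hc.stronglyMeasurableAtFilter _ _) hc.continuousAt)
  refine hP.congr_fderiv (ContinuousLinearMap.ext fun v => ?_)
  have hv : v = inl ℝ H ℝ v.1 + v.2 • ((0 : H), (1 : ℝ)) := by simp
  rw [hv, map_add, map_smul, ← comp_apply, hx, hlam]
  simp

theorem integral_fderiv_apply_eq_zero [FiniteDimensional ℝ H] [MeasurableSpace H]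
    [BorelSpace H] (μ : Measure H) [μ.IsAddHaarMeasure] {g : H → E} (hg : ContDiff ℝ 1 g)
    (hsupp : HasCompactSupport g) (v : H) : ∫ x, fderiv ℝ g x v ∂μ = 0 := by
  have hg' : Continuous fun x => fderiv ℝ g x v :=
    (hg.continuous_fderiv one_ne_zero).clm_apply continuous_const
  have h := integral_bilinear_fderiv_right_eq_neg_left_of_integrable (μ := μ) (v := v)
    (f := fun _ => (1 : ℝ)) (B := lsmul ℝ ℝ) (by simp)
    (by simpa using hg'.integrable_of_hasCompactSupport (hsupp.fderiv_apply (𝕜 := ℝ) v))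
    (by simpa using hg.continuous.integrable_of_hasCompactSupport hsupp)
    (fun _ _ => differentiableAt_const _) (fun x _ => hg.differentiable one_ne_zero x)
  simpa using h

end ParametricIntegral

section Divergence

variable {d : ℕ}

noncomputable def traceCLM (d : ℕ) :
    (EuclideanSpace ℝ (Fin d) →L[ℝ] EuclideanSpace ℝ (Fin d)) →L[ℝ] ℝ :=
  ∑ i, EuclideanSpace.proj i ∘L apply ℝ _ (EuclideanSpace.single i 1)

theorem traceCLM_apply (L : EuclideanSpace ℝ (Fin d) →L[ℝ] EuclideanSpace ℝ (Fin d)) :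
    traceCLM d L = ∑ i, L (EuclideanSpace.single i 1) i := by
  simp [traceCLM]

theorem traceCLM_smulRight (φ : EuclideanSpace ℝ (Fin d) →L[ℝ] ℝ)
    (v : EuclideanSpace ℝ (Fin d)) : traceCLM d (φ.smulRight v) = φ v := by
  conv_rhs => rw [← (EuclideanSpace.basisFun (Fin d) ℝ).sum_repr v]
  simp [traceCLM_apply, mul_comm]

theorem vdiv_eq_traceCLM_fderiv (V : EuclideanSpace ℝ (Fin d) → EuclideanSpace ℝ (Fin d))
    (x : EuclideanSpace ℝ (Fin d)) : vdiv V x = traceCLM d (fderiv ℝ V x) :=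
  (traceCLM_apply _).symm

theorem integral_vdiv_eq_zero {w : EuclideanSpace ℝ (Fin d) → EuclideanSpace ℝ (Fin d)}
    (hw : ContDiff ℝ 1 w) (hsupp : HasCompactSupport w) : ∫ x, vdiv w x = 0 := by
  have hint : Integrable (fderiv ℝ w) :=
    (hw.continuous_fderiv one_ne_zero).integrable_of_hasCompactSupport (hsupp.fderiv (𝕜 := ℝ))
  have hzero : ∫ x, fderiv ℝ w x = 0 := ext fun v => by
    rw [integral_apply hint, integral_fderiv_apply_eq_zero volume hw hsupp v, zero_apply]
  simp_rw [vdiv_eq_traceCLM_fderiv]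
  rw [(traceCLM d).integral_comp_comm hint, hzero, map_zero]

theorem vdiv_paramPrimitive_comp
    {f : EuclideanSpace ℝ (Fin d) × ℝ → EuclideanSpace ℝ (Fin d)} (hf : ContDiff ℝ 1 f)
    {u : EuclideanSpace ℝ (Fin d) → ℝ} {x : EuclideanSpace ℝ (Fin d)}
    (hu : DifferentiableAt ℝ u x) :
    vdiv (fun y => paramPrimitive f (y, u y)) x
      = ⟪f (x, u x), gradient u x⟫ + ∫ t in (0 : ℝ)..u x, vdiv (fun y => f (y, t)) x := by
  have hw := (hasFDerivAt_paramPrimitive hf (x, u x)).comp x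
    ((hasFDerivAt_id x).prodMk hu.hasFDerivAt)
  simp only [Function.comp_def, id_eq] at hw
  have hpartial (t : ℝ) :
      vdiv (fun y => f (y, t)) x = traceCLM d (fderiv ℝ f (x, t) ∘L inl ℝ _ ℝ) := by
    have h := (hf.differentiable one_ne_zero _).hasFDerivAt.comp x (hasFDerivAt_prodMk_left x t)
    rw [Function.comp_def] at h
    rw [vdiv_eq_traceCLM_fderiv, h.fderiv]
  have hcont : Continuous fun t => fderiv ℝ f (x, t) ∘L inl ℝ (EuclideanSpace ℝ (Fin d)) ℝ :=
    ((hf.continuous_fderiv one_ne_zero).comp (by fun_prop)).clm_comp continuous_const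
  have hgraph : (snd ℝ _ ℝ).smulRight (f (x, u x)) ∘L (ContinuousLinearMap.id ℝ _).prod
      (fderiv ℝ u x) = (fderiv ℝ u x).smulRight (f (x, u x)) := by
    ext; simp
  simp_rw [hpartial]
  rw [(traceCLM d).intervalIntegral_comp_comm (hcont.intervalIntegrable _ _),
    vdiv_eq_traceCLM_fderiv, hw.fderiv, add_comp, comp_assoc, fst_comp_prod, comp_id, hgraph,
    map_add, traceCLM_smulRight, ← inner_gradient_left, real_inner_comm, add_comm]

end Divergence

/-- If `f : ℝ^d × ℝ → ℝ^d` is `C¹` and divergence-free in `x` for every fixed `λ`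
(geometry compatibility), and `u : ℝ^d → ℝ` is `C¹` with compact support, then
`∫_{ℝ^d} ⟨f(x,u(x)), ∇u(x)⟩ dx = 0`. -/
theorem integral_inner_flux_gradient_eq_zero
    (d : ℕ)
    (f : EuclideanSpace ℝ (Fin d) × ℝ → EuclideanSpace ℝ (Fin d))
    (hf : ContDiff ℝ 1 f)
    (hdiv : ∀ (x : EuclideanSpace ℝ (Fin d)) (lam : ℝ),
      vdiv (fun y => f (y, lam)) x = 0)
    (u : EuclideanSpace ℝ (Fin d) → ℝ) (hu : ContDiff ℝ 1 u)
    (husupp : HasCompactSupport u) :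
    ∫ x : EuclideanSpace ℝ (Fin d), ⟪f (x, u x), gradient u x⟫ = 0 := by
  have hw : ContDiff ℝ 1 fun x => paramPrimitive f (x, u x) :=
    (contDiff_paramPrimitive hf).comp (contDiff_id.prodMk hu)
  have hw_supp : HasCompactSupport fun x => paramPrimitive f (x, u x) :=
    husupp.mono fun x hx hux => hx (by simp [hux, paramPrimitive_zero])
  calc ∫ x, ⟪f (x, u x), gradient u x⟫
      = ∫ x, vdiv (fun y => paramPrimitive f (y, u y)) x := by
        refine integral_congr_ae (Eventually.of_forall fun x => ?_)
        simp [vdiv_paramPrimitive_comp hf (hu.differentiable one_ne_zero x), hdiv]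
    _ = 0 := integral_vdiv_eq_zero hw hw_supp
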